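/- arXiv:1704.02595 — 5 statements merged into one kernel-verified Lean document; each statement's English description precedes it below -/
import Mathlib

section
/- Let Γ be a countable group, Z a uniformly recurrent subgroup of Γ, and (X,Γ,α) a Z-proper Γ-system. Then the stabilizer map x ↦ Stab_α(x) is continuous from X to Sub(Γ). -/
/-- Conjugation action of a group on its subgroups: `g • H = gHg⁻¹`. -/
def conjSub {Γ : Type*} [Group Γ] (g : Γ) (H : Subgroup Γ) : Subgroup Γ :=
  Subgroup.map (MulAut.conj g).toMonoidHom H

/-- The Chabauty-type topology on `Sub(Γ)`: the topology induced from the product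
topology on `{0,1}^Γ` via `H ↦ (γ ↦ decide (γ ∈ H))`. -/
noncomputable instance chabauty {Γ : Type*} [Group Γ] : TopologicalSpace (Subgroup Γ) :=
  TopologicalSpace.induced
    (fun H (g : Γ) => @decide (g ∈ H) (Classical.dec _)) inferInstance

/-- A uniformly recurrent subgroup: a nonempty, closed, conjugation-invariant subset of
`Sub(Γ)` on which every conjugation orbit is dense. -/
structure IsURS {Γ : Type*} [Group Γ] (Z : Set (Subgroup Γ)) : Prop where
  nonempty : Z.Nonempty
  closed : IsClosed Z
  invariant : ∀ g : Γ, ∀ H ∈ Z, conjSub g H ∈ Z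
  minimal : ∀ H ∈ Z, ∀ K ∈ Z, K ∈ closure {L : Subgroup Γ | ∃ g : Γ, conjSub g H = L}

/-- The set of elements fixing pointwise some open neighborhood of `x`. -/
def stab0 (Γ : Type*) [Group Γ] {X : Type*} [TopologicalSpace X] [MulAction Γ X]
    (x : X) : Set Γ :=
  {γ : Γ | ∃ U : Set X, IsOpen U ∧ x ∈ U ∧ ∀ y ∈ U, γ • y = y}

/-- A `Γ`-system is `Z`-proper if every stabilizer coincides with the corresponding
neighborhood stabilizer and belongs to `Z`. -/
def IsZProper (Γ : Type*) [Group Γ] {X : Type*} [TopologicalSpace X] [MulAction Γ X]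
    (Z : Set (Subgroup Γ)) : Prop :=
  ∀ x : X, ((MulAction.stabilizer Γ x : Subgroup Γ) : Set Γ) = stab0 Γ x ∧
    MulAction.stabilizer Γ x ∈ Z


/-!
The stabilizer map is continuous at `x` exactly when, for every `g`, the condition `g • y = y`
is locally constant near `x`. Failure of `g • y = y` is an open condition since fixed-point sets
are closed in a Hausdorff space; `Stab = Stab⁰` says that `g • y = y` is an open condition too.
-/

open MulAction

theorem continuous_subgroup_iff_isClopen {Γ X : Type*} [Group Γ] [TopologicalSpace X]
    {f : X → Subgroup Γ} : Continuous f ↔ ∀ g : Γ, IsClopen {x | g ∈ f x} := by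
  simp only [continuous_induced_rng, continuous_pi_iff, ← continuous_boolIndicator_iff_isClopen]
  -- the `g`-th coordinate `decide (g ∈ f x)` is the Boolean indicator of `{x | g ∈ f x}`
  rfl

section

variable {Γ X : Type*} [Group Γ] [TopologicalSpace X] [MulAction Γ X]

theorem isClosed_fixedBy [T2Space X] [ContinuousConstSMul Γ X] (g : Γ) :
    IsClosed (fixedBy X g) :=
  isClosed_eq (continuous_const_smul g) continuous_id

theorem isOpen_fixedBy_of_stabilizer_eq_stab0
    (h : ∀ x : X, (stabilizer Γ x : Set Γ) = stab0 Γ x) (g : Γ) : IsOpen (fixedBy X g) :=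
  isOpen_iff_forall_mem_open.mpr fun x hx => by
    obtain ⟨U, hU, hxU, hfix⟩ : g ∈ stab0 Γ x := h x ▸ hx
    exact ⟨U, hfix, hU, hxU⟩

theorem continuous_stabilizer_of_stabilizer_eq_stab0 [T2Space X] [ContinuousConstSMul Γ X]
    (h : ∀ x : X, (stabilizer Γ x : Set Γ) = stab0 Γ x) :
    Continuous fun x : X => stabilizer Γ x :=
  continuous_subgroup_iff_isClopen.mpr fun g =>
    ⟨isClosed_fixedBy g, isOpen_fixedBy_of_stabilizer_eq_stab0 h g⟩

end

theorem stabilizer_map_continuous_of_isZProper_general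
    {Γ : Type*} [Group Γ]
    {X : Type*} [TopologicalSpace X] [TopologicalSpace.MetrizableSpace X]
    [MulAction Γ X] [ContinuousConstSMul Γ X]
    (Z : Set (Subgroup Γ)) (hproper : IsZProper Γ (X := X) Z) :
    Continuous (fun x : X => MulAction.stabilizer Γ x) :=
  continuous_stabilizer_of_stabilizer_eq_stab0 fun x => (hproper x).1

/-- for a `Z`-proper system the stabilizer map `x ↦ Stab_α(x)` is continuous
from `X` to `Sub(Γ)`. -/
theorem stabilizer_map_continuous_of_isZProper
    {Γ : Type*} [Group Γ] [Countable Γ]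
    {X : Type*} [TopologicalSpace X] [CompactSpace X] [TopologicalSpace.MetrizableSpace X]
    [MulAction Γ X] [ContinuousConstSMul Γ X]
    (Z : Set (Subgroup Γ)) (hZ : IsURS Z) (hproper : IsZProper Γ (X := X) Z) :
    Continuous (fun x : X => MulAction.stabilizer Γ x) :=
  stabilizer_map_continuous_of_isZProper_general Z hproper
end

section
/- Let Γ be a finitely generated group and Z a uniformly recurrent subgroup of Γ. Then there exists a Γ-system (X,Γ,α) with X nonempty compact metrizable which is minimal (every orbit is dense in X) and Z-proper; in particular Z is the stability system of a minimal action of Γ. -/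
/-- A `Γ`-system: a nonempty compact metrizable space with a continuous `Γ`-action
(by homeomorphisms). -/
structure GammaSystem (Γ : Type) [Group Γ] where
  X : Type
  [topX : TopologicalSpace X]
  [compactX : CompactSpace X]
  [metrizableX : TopologicalSpace.MetrizableSpace X]
  [nonemptyX : Nonempty X]
  [act : MulAction Γ X]
  [cts : ContinuousConstSMul Γ X]

attribute [instance] GammaSystem.topX GammaSystem.compactX GammaSystem.metrizableX
  GammaSystem.nonemptyX GammaSystem.act GammaSystem.cts

/-- A system is minimal if every orbit is dense. -/
def GammaSystem.Minimal {Γ : Type} [Group Γ] (S : GammaSystem Γ) : Prop :=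
  ∀ x : S.X, Dense {y : S.X | ∃ g : Γ, g • x = y}

/-!
Let `Γ` act on pairs `(H, c)` with `H ≤ Γ` and `c : Γ → Γ → Fin 3` by
`g • (H, c) = (gHg⁻¹, c (· * g))`, and call `(H, c)` admissible if `H ∈ Z`, `c` is constant on
the left cosets of `H`, and for every `u` the colouring `γ ↦ c γ u` separates the cosets `γH`
and `uγH` whenever they differ. The stabilizer of an admissible pair is then exactly `H`; as
`H` depends locally constantly on the point, stabilizers are also neighbourhood stabilizers.
Admissible pairs form a closed invariant set, nonempty because the graph of a single permutation
has degree at most two and is therefore greedily 3-colourable, and every minimal subsystem of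
it (Zorn plus compactness) is the required system. Countability of `Γ` makes the space
metrizable.
-/
open Pointwise Topology

section Conjugation

variable {Γ : Type*} [Group Γ]

theorem conjSub_eq_smul (g : Γ) (H : Subgroup Γ) : conjSub g H = ConjAct.toConjAct g • H := rfl

theorem mem_conjSub {g γ : Γ} {H : Subgroup Γ} : γ ∈ conjSub g H ↔ g⁻¹ * γ * g ∈ H := by
  simp [conjSub_eq_smul, Subgroup.mem_pointwise_smul_iff_inv_smul_mem, ConjAct.smul_def]

theorem conjSub_one (H : Subgroup Γ) : conjSub 1 H = H := by
  simp [conjSub_eq_smul]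

theorem conjSub_mul (g₁ g₂ : Γ) (H : Subgroup Γ) :
    conjSub (g₁ * g₂) H = conjSub g₁ (conjSub g₂ H) := by
  simp [conjSub_eq_smul, mul_smul]

theorem conjSub_eq_self_of_mem {g : Γ} {H : Subgroup Γ} (hg : g ∈ H) : conjSub g H = H := by
  ext γ
  rw [mem_conjSub, H.mul_mem_cancel_right hg, H.mul_mem_cancel_left (H.inv_mem hg)]

end Conjugation

section Chabauty

variable {Γ : Type*} [Group Γ]

noncomputable def memIndicator (H : Subgroup Γ) (g : Γ) : Bool :=
  @decide (g ∈ H) (Classical.dec _)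

theorem memIndicator_eq_true {H : Subgroup Γ} {g : Γ} : memIndicator H g = true ↔ g ∈ H :=
  @decide_eq_true_iff _ (Classical.dec _)

theorem isEmbedding_memIndicator : IsEmbedding (memIndicator (Γ := Γ)) where
  eq_induced := rfl
  injective _ _ h := by
    ext g
    rw [← memIndicator_eq_true, h, memIndicator_eq_true]

theorem range_memIndicator : Set.range (memIndicator (Γ := Γ)) =
    {f | f 1 = true ∧ (∀ a b, f a = true → f b = true → f (a * b) = true) ∧
      ∀ a, f a = true → f a⁻¹ = true} := by
  ext f
  constructor
  · rintro ⟨H, rfl⟩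
    simp only [Set.mem_ofPred_eq, memIndicator_eq_true]
    exact ⟨H.one_mem, fun _ _ => H.mul_mem, fun _ => H.inv_mem⟩
  · rintro ⟨h1, hmul, hinv⟩
    let H : Subgroup Γ :=
      { carrier := {g | f g = true}
        one_mem' := h1
        mul_mem' := hmul _ _
        inv_mem' := hinv _ }
    exact ⟨H, funext fun g => Bool.eq_iff_iff.mpr memIndicator_eq_true⟩

theorem isClosed_range_memIndicator : IsClosed (Set.range (memIndicator (Γ := Γ))) := by
  have hev : ∀ a : Γ, IsClopen {f : Γ → Bool | f a = true} :=
    fun a => (isClopen_discrete {true}).preimage (continuous_apply a)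
  rw [range_memIndicator]
  simp only [Set.ofPred_and, Set.ofPred_forall]
  refine (hev 1).isClosed.inter (IsClosed.inter ?_ ?_)
  · exact isClosed_iInter fun a => isClosed_iInter fun b =>
      isClosed_imp (hev a).isOpen (isClosed_imp (hev b).isOpen (hev _).isClosed)
  · exact isClosed_iInter fun a => isClosed_imp (hev a).isOpen (hev _).isClosed

instance : CompactSpace (Subgroup Γ) :=
  isCompact_univ_iff.mp <| isEmbedding_memIndicator.isCompact_iff.mpr <| by
    simpa only [Set.image_univ] using isClosed_range_memIndicator.isCompact

instance [Countable Γ] : TopologicalSpace.MetrizableSpace (Subgroup Γ) :=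
  isEmbedding_memIndicator.metrizableSpace

theorem isClopen_setOf_mem (g : Γ) : IsClopen {H : Subgroup Γ | g ∈ H} := by
  simpa only [Set.preimage, Set.mem_ofPred_eq, Set.mem_singleton_iff, memIndicator_eq_true] using
    ((isClopen_discrete {true}).preimage (continuous_apply g)).preimage
      isEmbedding_memIndicator.continuous

theorem continuous_conjSub (g : Γ) : Continuous (conjSub g) := by
  refine isEmbedding_memIndicator.isInducing.continuous_iff.mpr (continuous_pi fun γ => ?_)
  have : (fun H => memIndicator (conjSub g H) γ) = fun H => memIndicator H (g⁻¹ * γ * g) := by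
    funext H
    exact Bool.eq_iff_iff.mpr (by rw [memIndicator_eq_true, memIndicator_eq_true, mem_conjSub])
  simpa only [Function.comp_def, this] using
    (continuous_apply _).comp isEmbedding_memIndicator.continuous

end Chabauty

theorem SimpleGraph.colorable_of_forall_encard_neighborSet_lt {V : Type*} (G : SimpleGraph V)
    {k : ℕ} (h : ∀ v, (G.neighborSet v).encard < k) : G.Colorable k := by
  let r : V → V → Prop := WellOrderingRel
  have fresh : ∀ v (c : ∀ w, r w v → Fin k), ∃ i, ∀ w hw, G.Adj v w → c w hw ≠ i := by
    intro v c
    have hk : 0 < k := by exact_mod_cast pos_of_gt (h v)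
    classical
    let c' : V → Fin k := fun w => if hw : r w v then c w hw else ⟨0, hk⟩
    have hc' : c' '' G.neighborSet v ≠ Set.univ := by
      intro huniv
      have := (Set.encard_image_le c' _).trans_lt (h v)
      simp [huniv, Set.encard_univ] at this
    obtain ⟨i, hi⟩ := (Set.ne_univ_iff_exists_notMem _).mp hc'
    exact ⟨i, fun w hw hvw hwi => hi ⟨w, hvw, by simp [c', hw, hwi]⟩⟩
  -- greedy colouring along a well-order: each vertex avoids the colours of its predecessors
  let c : V → Fin k := IsWellFounded.wf.fix fun v c => Classical.choose (fresh v c)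
  have hc : ∀ v w, G.Adj v w → r w v → c v ≠ c w := fun v w hvw hwv => by
    change IsWellFounded.wf.fix _ v ≠ _
    rw [IsWellFounded.wf.fix_eq]
    exact (Classical.choose_spec (fresh v fun w _ => c w) w hwv hvw).symm
  refine ⟨SimpleGraph.Coloring.mk c fun {v w} hvw => ?_⟩
  rcases trichotomous_of r v w with hvw' | rfl | hwv
  · exact (hc w v hvw.symm hvw').symm
  · exact absurd hvw (G.loopless.irrefl _)
  · exact hc v w hvw hwv

theorem Equiv.Perm.exists_coloring_fin_three {Q : Type*} (f : Equiv.Perm Q) :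
    ∃ c : Q → Fin 3, ∀ x, f x ≠ x → c (f x) ≠ c x := by
  let G := SimpleGraph.fromRel fun x y => y = f x
  have hnbr : ∀ x, G.neighborSet x ⊆ {f x, f.symm x} := by
    rintro x y ⟨-, rfl | rfl⟩ <;> simp
  have hdeg : ∀ x, (G.neighborSet x).encard < 3 := fun x =>
    calc (G.neighborSet x).encard ≤ ({f x, f.symm x} : Set Q).encard :=
          Set.encard_le_encard (hnbr x)
      _ ≤ ({f.symm x} : Set Q).encard + 1 := Set.encard_insert_le _ _
      _ < 3 := by norm_num
  obtain ⟨col⟩ := G.colorable_of_forall_encard_neighborSet_lt hdeg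
  exact ⟨col, fun x hx => (col.valid (by simp [G, hx.symm])).symm⟩

instance SubMulAction.continuousConstSMul {G P : Type*} [Monoid G] [MulAction G P]
    [TopologicalSpace P] [ContinuousConstSMul G P] (M : SubMulAction G P) :
    ContinuousConstSMul G M :=
  ⟨fun g => ((continuous_const_smul g).comp continuous_subtype_val).subtype_mk _⟩

theorem exists_isMinimal_subMulAction {G P : Type*} [Monoid G] [MulAction G P]
    [TopologicalSpace P] [CompactSpace P] [ContinuousConstSMul G P] {X : Set P}
    (hXc : IsClosed X) (hXne : X.Nonempty) (hX : ∀ g : G, g • X ⊆ X) :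
    ∃ M : SubMulAction G P, (M : Set P) ⊆ X ∧ IsClosed (M : Set P) ∧ (M : Set P).Nonempty ∧
      MulAction.IsMinimal G M := by
  let S : Set (Set P) := {A | A.Nonempty ∧ IsClosed A ∧ ∀ g : G, g • A ⊆ A}
  have hchain : ∀ c ⊆ S, IsChain (· ⊆ ·) c → c.Nonempty → ∃ lb ∈ S, ∀ s ∈ c, lb ⊆ s := by
    intro c hcS hc ⟨s₀, hs₀⟩
    have : Nonempty c := ⟨⟨s₀, hs₀⟩⟩
    refine ⟨⋂₀ c, ⟨?_, isClosed_sInter fun s hs => (hcS hs).2.1, ?_⟩,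
      fun s hs => Set.sInter_subset_of_mem hs⟩
    · refine IsCompact.nonempty_sInter_of_directed_nonempty_isCompact_isClosed
        (fun s hs t ht => (hc.total hs ht).elim (fun h => ⟨s, hs, subset_rfl, h⟩)
          fun h => ⟨t, ht, h, subset_rfl⟩)
        (fun s hs => (hcS hs).1) (fun s hs => (hcS hs).2.1.isCompact) fun s hs => (hcS hs).2.1
    · rintro g _ ⟨x, hx, rfl⟩ s hs
      exact (hcS hs).2.2 g ⟨x, hx s hs, rfl⟩
  obtain ⟨M, hMX, hM⟩ := zorn_superset_nonempty S hchain X ⟨hXne, hXc, hX⟩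
  obtain ⟨hMne, hMc, hMinv⟩ := hM.prop
  have horbit : ∀ p ∈ M, closure (MulAction.orbit G p) = M := fun p hp =>
    hM.eq_of_le ⟨⟨p, subset_closure (MulAction.mem_orbit_self p)⟩, isClosed_closure,
      fun g => smul_closure_orbit_subset g p⟩
      (closure_minimal (by rintro _ ⟨g, rfl⟩; exact hMinv g ⟨p, hp, rfl⟩) hMc)
  refine ⟨⟨M, fun g p hp => hMinv g ⟨p, hp, rfl⟩⟩, hMX, hMc, hMne, ⟨fun p => ?_⟩⟩
  rw [Subtype.dense_iff, SubMulAction.val_image_orbit]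
  exact (horbit p p.2).symm.subset

theorem stab0_eq_stabilizer_of_isOpen_fixedBy {Γ X : Type*} [Group Γ] [TopologicalSpace X]
    [MulAction Γ X] (h : ∀ g : Γ, IsOpen (MulAction.fixedBy X g)) (x : X) :
    stab0 Γ x = MulAction.stabilizer Γ x := by
  ext g
  exact ⟨fun ⟨U, _, hxU, hU⟩ => hU x hxU,
    fun hg => ⟨MulAction.fixedBy X g, h g, hg, fun _ hy => hy⟩⟩

def ColoredSubgroup (Γ C : Type*) [Group Γ] : Type _ := Subgroup Γ × (Γ → Γ → C)

namespace ColoredSubgroup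

variable {Γ C : Type*} [Group Γ]

noncomputable instance [TopologicalSpace C] : TopologicalSpace (ColoredSubgroup Γ C) :=
  inferInstanceAs (TopologicalSpace (Subgroup Γ × (Γ → Γ → C)))

instance [TopologicalSpace C] [CompactSpace C] : CompactSpace (ColoredSubgroup Γ C) :=
  inferInstanceAs (CompactSpace (Subgroup Γ × (Γ → Γ → C)))

instance [TopologicalSpace C] [TopologicalSpace.MetrizableSpace C]
    [SecondCountableTopology C] [Countable Γ] :
    TopologicalSpace.MetrizableSpace (ColoredSubgroup Γ C) :=
  inferInstanceAs (TopologicalSpace.MetrizableSpace (Subgroup Γ × (Γ → Γ → C)))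

instance : MulAction Γ (ColoredSubgroup Γ C) where
  smul g p := (conjSub g p.1, fun γ => p.2 (γ * g))
  one_smul p := Prod.ext (conjSub_one p.1) (funext fun γ => congrArg p.2 (mul_one γ))
  mul_smul g₁ g₂ p :=
    Prod.ext (conjSub_mul g₁ g₂ p.1) (funext fun γ => congrArg p.2 (mul_assoc γ g₁ g₂).symm)

theorem smul_fst (g : Γ) (p : ColoredSubgroup Γ C) : (g • p).1 = conjSub g p.1 := rfl

theorem smul_snd (g : Γ) (p : ColoredSubgroup Γ C) (γ : Γ) : (g • p).2 γ = p.2 (γ * g) := rfl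

instance [TopologicalSpace C] : ContinuousConstSMul Γ (ColoredSubgroup Γ C) :=
  ⟨fun g => ((continuous_conjSub g).comp continuous_fst).prodMk
    (continuous_pi fun γ => (continuous_apply (γ * g)).comp continuous_snd)⟩

def admissible (Z : Set (Subgroup Γ)) : Set (ColoredSubgroup Γ C) :=
  {p | p.1 ∈ Z ∧ (∀ γ h, h ∈ p.1 → p.2 (γ * h) = p.2 γ) ∧
    ∀ u γ, p.2 (u * γ) u = p.2 γ u → γ⁻¹ * u * γ ∈ p.1}

variable {Z : Set (Subgroup Γ)}

theorem isClosed_admissible [TopologicalSpace C] [DiscreteTopology C] (hZ : IsClosed Z) :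
    IsClosed (admissible (C := C) Z) := by
  have hmem : ∀ g : Γ, IsClopen {p : ColoredSubgroup Γ C | g ∈ p.1} :=
    fun g => (isClopen_setOf_mem g).preimage continuous_fst
  have hcoord : ∀ γ : Γ, Continuous fun p : ColoredSubgroup Γ C => p.2 γ :=
    fun γ => (continuous_apply γ).comp continuous_snd
  have hconst : IsClosed {p : ColoredSubgroup Γ C | ∀ γ h, h ∈ p.1 → p.2 (γ * h) = p.2 γ} := by
    simp only [Set.ofPred_forall]
    exact isClosed_iInter fun γ => isClosed_iInter fun h =>
      isClosed_imp (hmem h).isOpen (isClosed_eq (hcoord _) (hcoord _))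
  have hsep : IsClosed {p : ColoredSubgroup Γ C |
      ∀ u γ, p.2 (u * γ) u = p.2 γ u → γ⁻¹ * u * γ ∈ p.1} := by
    simp only [Set.ofPred_forall]
    refine isClosed_iInter fun u => isClosed_iInter fun γ => isClosed_imp ?_ (hmem _).isClosed
    exact (isOpen_discrete {q : C × C | q.1 = q.2}).preimage
      ((continuous_apply u).comp (hcoord _) |>.prodMk ((continuous_apply u).comp (hcoord _)))
  exact (hZ.preimage continuous_fst).inter (hconst.inter hsep)

theorem smul_admissible_subset (hZ : ∀ g : Γ, ∀ H ∈ Z, conjSub g H ∈ Z) (g : Γ) :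
    g • admissible (C := C) Z ⊆ admissible Z := by
  rintro _ ⟨p, ⟨hpZ, hconst, hsep⟩, rfl⟩
  refine ⟨hZ g _ hpZ, fun γ h hh => ?_, fun u γ hu => ?_⟩
  · rw [smul_fst, mem_conjSub] at hh
    simpa only [smul_snd, show γ * h * g = γ * g * (g⁻¹ * h * g) by group] using hconst _ _ hh
  · rw [smul_fst, mem_conjSub, show g⁻¹ * (γ⁻¹ * u * γ) * g = (γ * g)⁻¹ * u * (γ * g) by group]
    exact hsep u (γ * g) (by simpa only [smul_snd, mul_assoc] using hu)

theorem smul_eq_self_iff {p : ColoredSubgroup Γ C} (hp : p ∈ admissible Z) {g : Γ} :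
    g • p = p ↔ g ∈ p.1 := by
  refine ⟨fun hg => ?_, fun hg => ?_⟩
  · have h : p.2 (1 * g) g = p.2 1 g := congrFun (congrFun (congrArg Prod.snd hg) 1) g
    simpa using hp.2.2 g 1 (by simpa using h)
  · exact Prod.ext (conjSub_eq_self_of_mem hg) (funext fun γ => hp.2.1 γ g hg)

theorem admissible_nonempty (hZ : Z.Nonempty) : (admissible (C := Fin 3) Z).Nonempty := by
  obtain ⟨H, hH⟩ := hZ
  choose c hc using fun u : Γ =>
    (MulAction.toPerm u : Equiv.Perm (Γ ⧸ H)).exists_coloring_fin_three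
  refine ⟨(H, fun γ u => c u γ), hH, fun γ h hh => funext fun u => ?_, fun u γ hu => ?_⟩
  · exact congrArg (c u) (QuotientGroup.mk_mul_of_mem γ hh)
  · by_contra hne
    refine hc u γ ?_ hu
    rw [MulAction.toPerm_apply, MulAction.Quotient.smul_mk, ne_comm, ne_eq, QuotientGroup.eq]
    simpa [mul_assoc] using hne

theorem isZProper_of_subset_admissible [TopologicalSpace C]
    (M : SubMulAction Γ (ColoredSubgroup Γ C))
    (hM : (M : Set (ColoredSubgroup Γ C)) ⊆ admissible Z) : IsZProper Γ (X := M) Z := by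
  have hstab : ∀ x : M, MulAction.stabilizer Γ x = (x : ColoredSubgroup Γ C).1 := fun x => by
    ext g
    rw [SubMulAction.stabilizer_of_subMul, MulAction.mem_stabilizer_iff, smul_eq_self_iff (hM x.2)]
  have hfix : ∀ g : Γ, IsOpen (MulAction.fixedBy M g) := fun g => by
    have : MulAction.fixedBy M g = {x : M | g ∈ (x : ColoredSubgroup Γ C).1} := by
      ext x
      rw [MulAction.mem_fixedBy, Subtype.ext_iff, SubMulAction.val_smul, smul_eq_self_iff (hM x.2)]
      rfl
    have hcont : Continuous fun x : M => (x : ColoredSubgroup Γ C).1 :=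
      continuous_fst.comp continuous_subtype_val
    rw [this]
    exact (isClopen_setOf_mem g).isOpen.preimage hcont
  exact fun x => ⟨(stab0_eq_stabilizer_of_isOpen_fixedBy hfix x).symm, hstab x ▸ (hM x.2).1⟩

end ColoredSubgroup

theorem Group.FG.countable (Γ : Type*) [Group Γ] [Group.FG Γ] : Countable Γ := by
  obtain ⟨α, _, φ, hφ⟩ := Group.fg_iff_exists_freeGroup_hom_surjective_finite.mp ‹Group.FG Γ›
  exact hφ.countable

/-- every URS of a finitely generated group is the stability system of a
minimal `Z`-proper system. -/
theorem exists_minimal_isZProper_system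
    {Γ : Type} [Group Γ] [Group.FG Γ]
    (Z : Set (Subgroup Γ)) (hZ : IsURS Z) :
    ∃ S : GammaSystem Γ, S.Minimal ∧ IsZProper Γ (X := S.X) Z := by
  have := Group.FG.countable Γ
  obtain ⟨M, hMX, hMc, hMne, hMmin⟩ := exists_isMinimal_subMulAction
    (ColoredSubgroup.isClosed_admissible hZ.closed)
    (ColoredSubgroup.admissible_nonempty hZ.nonempty)
    (ColoredSubgroup.smul_admissible_subset hZ.invariant)
  have := isCompact_iff_compactSpace.mp hMc.isCompact
  have := hMne.to_subtype
  have : TopologicalSpace.MetrizableSpace M := IsEmbedding.subtypeVal.metrizableSpace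
  exact ⟨⟨M⟩, MulAction.dense_orbit Γ, ColoredSubgroup.isZProper_of_subset_admissible M hMX⟩
end

section
/- For every d ≥ 1 there exists a constant C(d) such that every simple graph (finite or infinite) with all vertex degrees at most d admits a nonrepetitive vertex coloring using an alphabet of C(d) colors. -/
/-!
Rosenfeld's counting argument, then compactness. On a finite graph let `N(S)` count the
`C`-colorings that are nonrepetitive on the paths inside `S`. Removing a vertex `v` from `S` at
most doubles `N`, by induction on `S`: a coloring counted by `N(S \ {v})` but not by `N(S)` repeats
along a path of length `2t` in `S` through `v`, and there are at most `2t d^{4t}` such paths. On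
those colorings, forgetting the colors of the half of the path that contains `v` is injective (that
half copies the other one) and leaves a coloring nonrepetitive on `S` minus that half, so by
induction each path accounts for at most `2^t N(S \ {v}) / C^t` colorings. For `C = 64 d^4` this
sums to at most `N(S \ {v}) / 2`, hence `N(V) ≥ (C / 2)^{|V|} > 0`. Since a repetition lives on a
finite path, the infinite case follows from compactness of the space of colorings.
-/

/-- A vertex coloring `c` of a simple graph is nonrepetitive if there is no path
`x₁, …, x_{2n}` (vertices pairwise distinct, consecutive vertices adjacent) with
`c(xᵢ) = c(x_{n+i})` for all `1 ≤ i ≤ n`. (Indices below start at `0`.) -/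
def Nonrepetitive {V K : Type*} (G : SimpleGraph V) (c : V → K) : Prop :=
  ∀ n : ℕ, 0 < n → ∀ x : ℕ → V,
    (∀ i j, i < 2 * n → j < 2 * n → i ≠ j → x i ≠ x j) →
    (∀ i, i + 1 < 2 * n → G.Adj (x i) (x (i + 1))) →
    ∃ i < n, c (x i) ≠ c (x (n + i))

open Finset

section Paths

variable {V K : Type*} (G : SimpleGraph V)

def IsPathIn (S : Finset V) (m : ℕ) (x : ℕ → V) : Prop :=
  (∀ i j, i < m → j < m → i ≠ j → x i ≠ x j) ∧ (∀ i, i + 1 < m → G.Adj (x i) (x (i + 1))) ∧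
    ∀ i < m, x i ∈ S

def NonrepetitiveOn (S : Finset V) (c : V → K) : Prop :=
  ∀ n, 0 < n → ∀ x : ℕ → V, IsPathIn G S (2 * n) x → ∃ i < n, c (x i) ≠ c (x (n + i))

variable {G}

lemma IsPathIn.congr {S : Finset V} {m : ℕ} {x y : ℕ → V} (hx : IsPathIn G S m x)
    (hxy : ∀ i < m, y i = x i) : IsPathIn G S m y := by
  obtain ⟨hinj, hadj, hS⟩ := hx
  refine ⟨fun i j hi hj hij => ?_, fun i hi => ?_, fun i hi => ?_⟩
  · rw [hxy i hi, hxy j hj]; exact hinj i j hi hj hij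
  · rw [hxy i (by omega), hxy (i + 1) hi]; exact hadj i hi
  · rw [hxy i hi]; exact hS i hi

lemma IsPathIn.le_card [Fintype V] {S : Finset V} {m : ℕ} {x : ℕ → V} (hx : IsPathIn G S m x) :
    m ≤ Fintype.card V := by
  simpa using card_le_card_of_injOn x (s := range m) (t := univ)
    (fun _ _ => mem_coe.2 (mem_univ _))
    fun i hi j hj => not_imp_not.1 (hx.1 i j (mem_range.1 hi) (mem_range.1 hj))

lemma NonrepetitiveOn.mono {S T : Finset V} {c : V → K} (h : NonrepetitiveOn G T c)
    (hST : S ⊆ T) : NonrepetitiveOn G S c :=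
  fun n hn x ⟨hinj, hadj, hS⟩ => h n hn x ⟨hinj, hadj, fun i hi => hST (hS i hi)⟩

lemma NonrepetitiveOn.congr {S : Finset V} {c c' : V → K} (h : NonrepetitiveOn G S c)
    (hcc' : ∀ u ∈ S, c u = c' u) : NonrepetitiveOn G S c' := by
  intro n hn x hx
  obtain ⟨i, hi, hne⟩ := h n hn x hx
  exact ⟨i, hi, by rwa [← hcc' _ (hx.2.2 i (by omega)), ← hcc' _ (hx.2.2 (n + i) (by omega))]⟩

lemma nonrepetitiveOn_empty (c : V → K) : NonrepetitiveOn G ∅ c :=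
  fun _ hn _ hx => absurd (hx.2.2 0 (by omega)) (notMem_empty _)

lemma NonrepetitiveOn.nonrepetitive [Fintype V] {c : V → K} (h : NonrepetitiveOn G univ c) :
    Nonrepetitive G c :=
  fun n hn x hinj hadj => h n hn x ⟨hinj, hadj, fun _ _ => mem_univ _⟩

lemma IsPathIn.exists_half [DecidableEq V] {S : Finset V} {t j : ℕ} {y : ℕ → V}
    (hy : IsPathIn G S (2 * t) y) (hj : j < 2 * t) :
    ∃ H ⊆ S, y j ∈ H ∧ #H = t ∧ ∀ u ∈ H, ∃ w ∉ H,
      ∀ c : V → K, (∀ i < t, c (y i) = c (y (t + i))) → c u = c w := by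
  obtain ⟨hinj, -, hS⟩ := hy
  have hinj' : ∀ a b, a < 2 * t → b < 2 * t → y a = y b → a = b :=
    fun a b ha hb => not_imp_not.1 (hinj a b ha hb)
  -- `H` is the half `y o, …, y (o + t - 1)` containing `y j`; the other half starts at `o'`.
  obtain ⟨o, o', ho, hjo⟩ : ∃ o o', (o = 0 ∧ o' = t ∨ o = t ∧ o' = 0) ∧ o ≤ j ∧ j < o + t := by
    rcases lt_or_ge j t with h | h
    exacts [⟨0, t, .inl ⟨rfl, rfl⟩, by omega⟩, ⟨t, 0, .inr ⟨rfl, rfl⟩, by omega⟩]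
  have hlt : ∀ i < t, o + i < 2 * t ∧ o' + i < 2 * t := by
    intro i hi; rcases ho with ⟨rfl, rfl⟩ | ⟨rfl, rfl⟩ <;> omega
  refine ⟨(range t).image fun i => y (o + i), ?_, ?_, ?_, ?_⟩
  · intro u hu
    obtain ⟨i, hi, rfl⟩ := mem_image.1 hu
    exact hS _ (hlt i (mem_range.1 hi)).1
  · exact mem_image.2 ⟨j - o, mem_range.2 (by omega), by rw [Nat.add_sub_cancel' hjo.1]⟩
  · refine (card_image_of_injOn fun a ha b hb hab => ?_).trans (card_range t)
    have := hinj' _ _ (hlt a (by simpa using ha)).1 (hlt b (by simpa using hb)).1 hab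
    omega
  · intro u hu
    obtain ⟨i, hi, rfl⟩ := mem_image.1 hu
    rw [mem_range] at hi
    refine ⟨y (o' + i), fun hmem => ?_, fun c hc => ?_⟩
    · obtain ⟨k, hk, hki⟩ := mem_image.1 hmem
      have := hinj' _ _ (hlt k (mem_range.1 hk)).1 (hlt i hi).2 hki
      rcases ho with ⟨rfl, rfl⟩ | ⟨rfl, rfl⟩ <;> simp at hk <;> omega
    · rcases ho with ⟨rfl, rfl⟩ | ⟨rfl, rfl⟩
      · simpa using hc i hi
      · simpa using (hc i hi).symm

end Paths

section Coding

variable {V : Type*} {G : SimpleGraph V} {d : ℕ}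

def walkSeq (f : V → Fin d → V) (u : V) (a : ℕ → Fin d) : ℕ → V
  | 0 => u
  | k + 1 => f (walkSeq f u a k) (a k)

variable [NeZero d] {f : V → Fin d → V}

lemma exists_walkSeq_eq (hf : ∀ u, G.neighborSet u ⊆ Set.range (f u)) {z : ℕ → V} {m n : ℕ}
    (hmn : m ≤ n) (hz : ∀ k < m, G.Adj (z k) (z (k + 1))) :
    ∃ a : Fin n → Fin d, ∀ k ≤ m, walkSeq f (z 0) (Function.extend Fin.val a 0) k = z k := by
  choose! g hg using fun k (hk : k < m) => hf (z k) (hz k hk)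
  refine ⟨fun i => g i, fun k hk => ?_⟩
  induction k with
  | zero => rfl
  | succ k ih =>
    rw [walkSeq, ih (by omega)]
    exact (Fin.val_injective.extend_apply (fun i : Fin n => g i) 0 ⟨k, by omega⟩).symm ▸ hg k hk

variable (f) in
/-- The code `(j, a, b)` walks back `j` steps from `v` along `b`, then forward along `a`;
every path of length `2t` through `v` has a code. -/
noncomputable def decodePath (v : V) (t : ℕ)
    (κ : Fin (2 * t) × (Fin (2 * t) → Fin d) × (Fin (2 * t) → Fin d)) : ℕ → V :=
  walkSeq f (walkSeq f v (Function.extend Fin.val κ.2.2 0) κ.1) (Function.extend Fin.val κ.2.1 0)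

lemma exists_decodePath_eq (hf : ∀ u, G.neighborSet u ⊆ Set.range (f u)) {t j : ℕ} {y : ℕ → V}
    (hadj : ∀ i, i + 1 < 2 * t → G.Adj (y i) (y (i + 1))) (hj : j < 2 * t) :
    ∃ κ, ∀ i < 2 * t, decodePath f (y j) t κ i = y i := by
  obtain ⟨b, hb⟩ := exists_walkSeq_eq hf (z := fun k => y (j - k)) (m := j) hj.le fun k hk => by
    simpa [show j - k = j - (k + 1) + 1 by omega] using (hadj (j - (k + 1)) (by omega)).symm
  obtain ⟨a, ha⟩ := exists_walkSeq_eq hf (z := y) (m := 2 * t - 1) (n := 2 * t) (by omega)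
    fun k hk => hadj k (by omega)
  refine ⟨(⟨j, hj⟩, a, b), fun i hi => ?_⟩
  have hy0 : walkSeq f (y j) (Function.extend Fin.val b 0) j = y 0 := by simpa using hb j le_rfl
  simp only [decodePath, hy0]
  exact ha i (by omega)

end Coding

lemma card_mul_card_pow_le_of_recolor {V K : Type*} [DecidableEq V] [Fintype K]
    {A B : Finset (V → K)} {H : Finset V}
    (hB : ∀ c ∈ A, ∀ c' : V → K, (∀ u ∉ H, c' u = c u) → c' ∈ B)
    (hA : ∀ u ∈ H, ∃ w ∉ H, ∀ c ∈ A, c u = c w) :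
    #A * Fintype.card K ^ #H ≤ #B := by
  classical
  let recolor : (V → K) × (H → K) → V → K := fun p u =>
    if h : u ∈ H then p.2 ⟨u, h⟩ else p.1 u
  have hout : ∀ p u, u ∉ H → recolor p u = p.1 u := fun p u hu => dif_neg hu
  have hinj : Set.InjOn recolor ↑(A ×ˢ (univ : Finset (H → K))) := by
    rintro ⟨c, g⟩ hp ⟨c', g'⟩ hq hcc'
    simp only [coe_product, coe_univ, Set.mem_prod, mem_coe, Set.mem_univ, and_true] at hp hq
    have hout' : ∀ u ∉ H, c u = c' u := fun u hu => by
      simpa [hout _ u hu] using congrFun hcc' u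
    refine Prod.ext (funext fun u => ?_) (funext fun u => ?_)
    · show c u = c' u
      by_cases hu : u ∈ H
      · obtain ⟨w, hw, hcw⟩ := hA u hu
        rw [hcw c hp, hcw c' hq, hout' w hw]
      · exact hout' u hu
    · simpa [recolor] using congrFun hcc' u
  calc #A * Fintype.card K ^ #H = #(A ×ˢ (univ : Finset (H → K))) := by
        simp [card_product]
    _ ≤ #B := card_le_card_of_injOn recolor
        (fun p hp => hB _ (mem_product.1 hp).1 _ (hout p)) hinj

lemma le_two_pow_card_mul_of_forall_erase {α : Type*} [DecidableEq α] {N : Finset α → ℕ}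
    {S : Finset α} (h : ∀ T ⊆ S, ∀ u ∈ T, N (T.erase u) ≤ 2 * N T) {B : Finset α} (hB : B ⊆ S) :
    N (S \ B) ≤ 2 ^ #B * N S := by
  induction B using Finset.induction_on with
  | empty => simp
  | insert u B hu ih =>
    obtain ⟨huS, hBS⟩ := insert_subset_iff.1 hB
    rw [sdiff_insert, card_insert_of_notMem hu, pow_succ]
    calc N ((S \ B).erase u) ≤ 2 * N (S \ B) := h _ sdiff_subset u (mem_sdiff.2 ⟨huS, hu⟩)
      _ ≤ 2 * (2 ^ #B * N S) := Nat.mul_le_mul_left _ (ih hBS)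
      _ = 2 ^ #B * 2 * N S := by ring

lemma sum_le_of_two_pow_succ_mul_le {B : ℕ → ℕ} {N M : ℕ}
    (h : ∀ t < M, 2 ^ (t + 1) * B t ≤ N) : ∑ t ∈ range M, B t ≤ N := by
  have hB : ∀ t ∈ range M, (B t : ℝ) ≤ N / 2 * (1 / 2) ^ t := by
    intro t ht
    have : (2 : ℝ) ^ (t + 1) * B t ≤ N := by exact_mod_cast h t (mem_range.1 ht)
    rw [pow_succ] at this
    rw [one_div_pow, div_mul_div_comm, mul_one, le_div_iff₀ (by positivity)]
    linarith
  have : (∑ t ∈ range M, B t : ℝ) ≤ N := calc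
    _ ≤ ∑ t ∈ range M, (N / 2 * (1 / 2 : ℝ) ^ t) := sum_le_sum hB
    _ = N / 2 * ∑ t ∈ range M, (1 / 2 : ℝ) ^ t := (mul_sum ..).symm
    _ ≤ N / 2 * 2 := by gcongr; exact sum_geometric_two_le M
    _ = N := by ring
  exact_mod_cast this

lemma mul_two_pow_le_sixtyFour_pow (t : ℕ) : t * 2 ^ (2 * t + 3) ≤ 64 ^ t := by
  rcases Nat.eq_zero_or_pos t with rfl | ht
  · simp
  calc t * 2 ^ (2 * t + 3) ≤ 2 ^ t * 2 ^ (2 * t + 3) :=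
        Nat.mul_le_mul_right _ Nat.lt_two_pow_self.le
    _ = 2 ^ (3 * t + 3) := by ring
    _ ≤ 2 ^ (6 * t) := Nat.pow_le_pow_right two_pos (by omega)
    _ = 64 ^ t := by rw [pow_mul]; norm_num

lemma two_pow_succ_mul_le_of_pow_mul_le {C d t B N : ℕ} (hd : 0 < d) (hC : 64 * d ^ 4 ≤ C)
    (h : C ^ t * B ≤ 2 * t * d ^ (2 * t) * d ^ (2 * t) * (2 ^ t * N)) :
    2 ^ (t + 1) * (2 * B) ≤ N := by
  have hCt : 0 < C ^ t := pow_pos (lt_of_lt_of_le (by positivity) hC) t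
  refine le_of_mul_le_mul_left ?_ hCt
  calc C ^ t * (2 ^ (t + 1) * (2 * B)) = 2 ^ (t + 2) * (C ^ t * B) := by ring
    _ ≤ 2 ^ (t + 2) * (2 * t * d ^ (2 * t) * d ^ (2 * t) * (2 ^ t * N)) := by gcongr
    _ = t * 2 ^ (2 * t + 3) * d ^ (4 * t) * N := by ring
    _ ≤ 64 ^ t * d ^ (4 * t) * N := by gcongr; exact mul_two_pow_le_sixtyFour_pow t
    _ = (64 * d ^ 4) ^ t * N := by ring
    _ ≤ C ^ t * N := by gcongr

section Counting

open scoped Classical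

variable {V : Type*} (G : SimpleGraph V) {d : ℕ} [NeZero d] (f : V → Fin d → V)

noncomputable def pathsThrough (S : Finset V) (v : V) (t : ℕ) : Finset (ℕ → V) :=
  (univ.image (decodePath f v t)).filter fun y => IsPathIn G S (2 * t) y ∧ ∃ j < 2 * t, y j = v

variable {G f}

lemma card_pathsThrough_le (S : Finset V) (v : V) (t : ℕ) :
    #(pathsThrough G f S v t) ≤ 2 * t * d ^ (2 * t) * d ^ (2 * t) :=
  (card_filter_le _ _).trans <| card_image_le.trans <| by simp [mul_assoc]

lemma exists_mem_pathsThrough (hf : ∀ u, G.neighborSet u ⊆ Set.range (f u)) {S : Finset V}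
    {t j : ℕ} {x : ℕ → V} (hx : IsPathIn G S (2 * t) x) (hj : j < 2 * t) :
    ∃ y ∈ pathsThrough G f S (x j) t, ∀ i < 2 * t, y i = x i := by
  obtain ⟨κ, hκ⟩ := exists_decodePath_eq hf hx.2.1 hj
  exact ⟨_, mem_filter.2 ⟨mem_image_of_mem _ (mem_univ κ), hx.congr hκ, j, hj, hκ j hj⟩, hκ⟩

variable [Fintype V] (G) (K : Type*) [Fintype K]

noncomputable def goodColorings (S : Finset V) : Finset (V → K) :=
  univ.filter (NonrepetitiveOn G S)

noncomputable def repeatingColorings (S : Finset V) (v : V) (t : ℕ) (y : ℕ → V) :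
    Finset (V → K) :=
  (goodColorings G K (S.erase v)).filter fun c => ∀ i < t, c (y i) = c (y (t + i))

variable {G K}

lemma card_sdiff_goodColorings_le (hf : ∀ u, G.neighborSet u ⊆ Set.range (f u)) (S : Finset V)
    (v : V) :
    #(goodColorings G K (S.erase v) \ goodColorings G K S) ≤
      ∑ t ∈ range (Fintype.card V + 1), ∑ y ∈ pathsThrough G f S v t,
        #(repeatingColorings G K S v t y) := by
  refine (card_le_card fun c hc => ?_).trans (card_biUnion_le.trans (sum_le_sum fun t _ =>
    card_biUnion_le))
  obtain ⟨hgood, hbad⟩ := mem_sdiff.1 hc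
  simp only [goodColorings, mem_filter, mem_univ, true_and, NonrepetitiveOn] at hgood hbad
  push Not at hbad
  obtain ⟨n, hn, x, hx, hrep⟩ := hbad
  -- the repetition must pass through `v`, since `c` is nonrepetitive on `S.erase v`
  obtain ⟨j, hj, rfl⟩ : ∃ j < 2 * n, x j = v := by
    by_contra! hv
    obtain ⟨i, hi, hne⟩ := hgood n hn x
      ⟨hx.1, hx.2.1, fun i hi => mem_erase.2 ⟨hv i hi, hx.2.2 i hi⟩⟩
    exact hne (hrep i hi)
  obtain ⟨y, hy, hyx⟩ := exists_mem_pathsThrough hf hx hj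
  have hn : n < Fintype.card V + 1 := by have := hx.le_card; omega
  refine mem_biUnion.2 ⟨n, mem_range.2 hn, mem_biUnion.2 ⟨y, hy, ?_⟩⟩
  refine mem_filter.2 ⟨mem_filter.2 ⟨mem_univ _, hgood⟩, fun i hi => ?_⟩
  rw [hyx i (by omega), hyx (n + i) (by omega)]
  exact hrep i hi

lemma card_repeatingColorings_mul_pow_le {S : Finset V} {v : V}
    (hchain : ∀ B ⊆ S.erase v,
      #(goodColorings G K (S.erase v \ B)) ≤ 2 ^ #B * #(goodColorings G K (S.erase v)))
    {t : ℕ} {y : ℕ → V} (hy : y ∈ pathsThrough G f S v t) :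
    #(repeatingColorings G K S v t y) * Fintype.card K ^ t ≤
      2 ^ t * #(goodColorings G K (S.erase v)) := by
  obtain ⟨-, hpath, j, hj, rfl⟩ := mem_filter.1 hy
  obtain ⟨H, hHS, hvH, hH, hpartner⟩ := hpath.exists_half (K := K) hj
  have hSH : S \ H = S.erase (y j) \ H.erase (y j) := by
    rw [← erase_sdiff_distrib, erase_eq_of_notMem fun h => (mem_sdiff.1 h).2 hvH]
  have hrecolor : #(repeatingColorings G K S (y j) t y) * Fintype.card K ^ #H ≤
      #(goodColorings G K (S \ H)) := by
    refine card_mul_card_pow_le_of_recolor (fun c hc c' hc' => ?_) fun u hu => ?_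
    · have hgood := (mem_filter.1 (mem_filter.1 hc).1).2
      refine mem_filter.2 ⟨mem_univ _, (hgood.mono ?_).congr fun u hu => (hc' u ?_).symm⟩
      · exact hSH ▸ sdiff_subset
      · exact (mem_sdiff.1 hu).2
    · obtain ⟨w, hw, hcw⟩ := hpartner u hu
      exact ⟨w, hw, fun c hc => hcw c (mem_filter.1 hc).2⟩
  calc #(repeatingColorings G K S (y j) t y) * Fintype.card K ^ t
      ≤ #(goodColorings G K (S.erase (y j) \ H.erase (y j))) := by
        rwa [hH, hSH] at hrecolor
    _ ≤ 2 ^ #(H.erase (y j)) * #(goodColorings G K (S.erase (y j))) :=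
      hchain _ (erase_subset_erase _ hHS)
    _ ≤ 2 ^ t * #(goodColorings G K (S.erase (y j))) := by
      gcongr
      · exact one_le_two
      · exact hH ▸ card_erase_le

lemma pow_mul_sum_card_repeatingColorings_le {S : Finset V} {v : V}
    (hchain : ∀ B ⊆ S.erase v,
      #(goodColorings G K (S.erase v \ B)) ≤ 2 ^ #B * #(goodColorings G K (S.erase v)))
    (t : ℕ) :
    Fintype.card K ^ t * ∑ y ∈ pathsThrough G f S v t, #(repeatingColorings G K S v t y) ≤
      2 * t * d ^ (2 * t) * d ^ (2 * t) * (2 ^ t * #(goodColorings G K (S.erase v))) := calc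
  _ = ∑ y ∈ pathsThrough G f S v t, #(repeatingColorings G K S v t y) * Fintype.card K ^ t := by
    rw [mul_sum]; simp only [mul_comm]
  _ ≤ ∑ _y ∈ pathsThrough G f S v t, 2 ^ t * #(goodColorings G K (S.erase v)) :=
    sum_le_sum fun _ hy => card_repeatingColorings_mul_pow_le hchain hy
  _ ≤ _ := by rw [sum_const, smul_eq_mul]; gcongr; exact card_pathsThrough_le S v t

theorem card_goodColorings_erase_le (hK : 64 * d ^ 4 ≤ Fintype.card K)
    (hf : ∀ u, G.neighborSet u ⊆ Set.range (f u)) (S : Finset V) :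
    ∀ v ∈ S, #(goodColorings G K (S.erase v)) ≤ 2 * #(goodColorings G K S) := by
  induction S using Finset.strongInduction with
  | H S ih =>
    intro v hv
    have hchain : ∀ B ⊆ S.erase v,
        #(goodColorings G K (S.erase v \ B)) ≤ 2 ^ #B * #(goodColorings G K (S.erase v)) :=
      fun _ => le_two_pow_card_mul_of_forall_erase (N := fun T => #(goodColorings G K T))
        fun T hT => ih T (hT.trans_ssubset (erase_ssubset hv))
    have hbad : 2 * #(goodColorings G K (S.erase v) \ goodColorings G K S) ≤
        #(goodColorings G K (S.erase v)) := calc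
      _ ≤ 2 * ∑ t ∈ range (Fintype.card V + 1), ∑ y ∈ pathsThrough G f S v t,
          #(repeatingColorings G K S v t y) := by gcongr; exact card_sdiff_goodColorings_le hf S v
      _ ≤ _ := by
        rw [mul_sum]
        exact sum_le_of_two_pow_succ_mul_le fun t _ =>
          two_pow_succ_mul_le_of_pow_mul_le (Nat.pos_of_neZero d) hK
            (pow_mul_sum_card_repeatingColorings_le hchain t)
    have hsub : goodColorings G K S ⊆ goodColorings G K (S.erase v) :=
      fun c hc => mem_filter.2 ⟨mem_univ c, (mem_filter.1 hc).2.mono (erase_subset v S)⟩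
    have := card_sdiff_add_card_eq_card hsub
    omega

theorem exists_nonrepetitive_of_card_le (hK : 64 * d ^ 4 ≤ Fintype.card K)
    (hf : ∀ u, G.neighborSet u ⊆ Set.range (f u)) : ∃ c : V → K, Nonrepetitive G c := by
  have hall : goodColorings G K ∅ = univ :=
    filter_true_of_mem fun c _ => nonrepetitiveOn_empty c
  have hle := le_two_pow_card_mul_of_forall_erase (N := fun S => #(goodColorings G K S))
    (fun T _ => card_goodColorings_erase_le hK hf T) (subset_refl univ)
  simp only [sdiff_self, bot_eq_empty, hall, card_univ, Fintype.card_fun] at hle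
  have hd := Nat.pos_of_neZero d
  have hKpos : 0 < Fintype.card K := lt_of_lt_of_le (by positivity) hK
  obtain ⟨c, hc⟩ := card_pos.1 (Nat.pos_of_mul_pos_left ((pow_pos hKpos _).trans_le hle))
  exact ⟨c, (mem_filter.1 hc).2.nonrepetitive⟩

end Counting

section Compactness

variable {V K : Type*}

theorem Nonrepetitive.comap {W : Type*} {G : SimpleGraph V} {H : SimpleGraph W} {c : V → K}
    (hc : Nonrepetitive G c) (φ : H ↪g G) : Nonrepetitive H (c ∘ φ) :=
  fun n hn x hinj hadj => hc n hn (φ ∘ x)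
    (fun i j hi hj hij => φ.injective.ne (hinj i j hi hj hij))
    (fun i hi => φ.map_adj_iff.2 (hadj i hi))

theorem exists_nonrepetitive_of_forall_finset [Finite K] [Nonempty K] (G : SimpleGraph V)
    (h : ∀ s : Finset V, ∃ c : s → K, Nonrepetitive (G.induce s) c) :
    ∃ c : V → K, Nonrepetitive G c := by
  classical
  let _ : TopologicalSpace K := ⊥
  have : DiscreteTopology K := ⟨rfl⟩
  let F : Finset V → Set (V → K) := fun s =>
    {c | Nonrepetitive (G.induce s) fun u : (s : Set V) => c u}
  have hclosed : ∀ s, IsClosed (F s) := by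
    intro s
    have hres : Continuous fun (c : V → K) (u : (s : Set V)) => c u :=
      continuous_pi fun u => continuous_apply _
    exact (isClosed_discrete {r : ↥(s : Set V) → K | Nonrepetitive (G.induce s) r}).preimage hres
  have hdir : Directed (· ⊇ ·) F := by
    intro s t
    refine ⟨s ∪ t, fun c hc => ?_, fun c hc => ?_⟩ <;>
      simp only [F, Set.mem_ofPred_eq] at hc ⊢
    · exact hc.comap (G.induceHomOfLE (coe_subset.2 subset_union_left))
    · exact hc.comap (G.induceHomOfLE (coe_subset.2 subset_union_right))
  have hne : ∀ s, (F s).Nonempty := by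
    intro s
    obtain ⟨c, hc⟩ := h s
    refine ⟨Function.extend Subtype.val c fun _ => Classical.arbitrary K, ?_⟩
    simpa only [F, Set.mem_ofPred_eq, Subtype.val_injective.extend_apply] using hc
  obtain ⟨c, hc⟩ := IsCompact.nonempty_iInter_of_directed_nonempty_isCompact_isClosed F hdir hne
    (fun s => (hclosed s).isCompact) hclosed
  refine ⟨c, fun n hn x hinj hadj => ?_⟩
  -- `x` is lifted to the finite set it visits; reducing indices mod `2n` keeps it inside.
  let s := (range (2 * n)).image x
  have hmod : ∀ i < 2 * n, i % (2 * n) = i := fun i hi => Nat.mod_eq_of_lt hi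
  let y : ℕ → (s : Set V) := fun i =>
    ⟨x (i % (2 * n)), mem_coe.2 (mem_image_of_mem _ (mem_range.2 (Nat.mod_lt _ (by omega))))⟩
  have hcs : c ∈ F s := Set.mem_iInter.1 hc s
  obtain ⟨i, hi, hne⟩ := hcs n hn y
    (fun i j hi hj hij h => hinj i j hi hj hij (by simpa [y, hmod i hi, hmod j hj] using h))
    (fun i hi => by simpa [y, hmod i (by omega), hmod (i + 1) hi] using hadj i hi)
  exact ⟨i, hi, by simpa [y, hmod i (by omega), hmod (n + i) (by omega)] using hne⟩

end Compactness

section Enumeration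

variable {V : Type*} {G : SimpleGraph V} {d : ℕ}

lemma exists_neighborSet_subset_range
    (hG : ∀ v, (G.neighborSet v).Finite ∧ (G.neighborSet v).ncard ≤ d) :
    ∃ f : V → Fin d → V, ∀ v, G.neighborSet v ⊆ Set.range (f v) := by
  refine ⟨fun v k => (hG v).1.toFinset.toList.getD k v, fun v w hw => ?_⟩
  obtain ⟨i, hi, rfl⟩ := List.mem_iff_getElem.1 (mem_toList.2 ((hG v).1.mem_toFinset.2 hw))
  have hlen : (hG v).1.toFinset.toList.length ≤ d := by
    simpa [Set.ncard_eq_toFinset_card _ (hG v).1] using (hG v).2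
  exact ⟨⟨i, hi.trans_le hlen⟩, List.getD_eq_getElem _ _ hi⟩

lemma exists_induce_neighborSet_subset_range {f : V → Fin d → V}
    (hf : ∀ v, G.neighborSet v ⊆ Set.range (f v)) (s : Set V) :
    ∃ f' : s → Fin d → s, ∀ v, (G.induce s).neighborSet v ⊆ Set.range (f' v) := by
  classical
  refine ⟨fun v k => if h : f v k ∈ s then ⟨f v k, h⟩ else v, fun v w hw => ?_⟩
  obtain ⟨k, hk⟩ := hf v (SimpleGraph.comap_adj.1 hw)
  exact ⟨k, by simp [hk]⟩

end Enumeration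

/-- for every `d ≥ 1` there is a constant `C(d)` such that every simple graph
(finite or infinite) with all vertex degrees at most `d` admits a nonrepetitive vertex
coloring with `C(d)` colors. -/
theorem exists_nonrepetitive_coloring_of_degree_bound :
    ∀ d : ℕ, 1 ≤ d → ∃ C : ℕ, ∀ (V : Type) (G : SimpleGraph V),
      (∀ v : V, (G.neighborSet v).Finite ∧ (G.neighborSet v).ncard ≤ d) →
      ∃ c : V → Fin C, Nonrepetitive G c := by
  intro d hd
  have : NeZero d := ⟨by omega⟩
  have : NeZero (64 * d ^ 4) := ⟨by positivity⟩
  refine ⟨64 * d ^ 4, fun V G hG => ?_⟩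
  obtain ⟨f, hf⟩ := exists_neighborSet_subset_range hG
  refine exists_nonrepetitive_of_forall_finset G fun s => ?_
  obtain ⟨f', hf'⟩ := exists_induce_neighborSet_subset_range hf s
  exact exists_nonrepetitive_of_card_le (by simp) hf'
end

section
/- Let G be a connected simple graph, c a nonrepetitive vertex coloring of G, and θ a graph automorphism of G satisfying c(θ(v)) = c(v) for every vertex v. Then θ fixes some vertex of G. -/
namespace SimpleGraph

variable {V : Type*} {G : SimpleGraph V}

lemma Walk.dist_getVert_le {u v : V} (p : G.Walk u v) {i j : ℕ} (hij : i ≤ j) :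
    G.dist (p.getVert i) (p.getVert j) ≤ j - i := by
  have hend : (p.drop i).getVert (j - i) = p.getVert j := by
    rw [Walk.drop_getVert, Nat.add_sub_cancel' hij]
  calc G.dist (p.getVert i) (p.getVert j)
      ≤ (((p.drop i).take (j - i)).copy rfl hend).length := dist_le _
    _ ≤ j - i := by simp [Walk.take_length]

lemma Walk.getVert_append_of_lt {u v w : V} (p : G.Walk u v) (q : G.Walk v w) {i : ℕ}
    (hi : i < p.length) : (p.append q).getVert i = p.getVert i := by
  simp [Walk.getVert_append, hi]

lemma Walk.getVert_append_length_add {u v w : V} (p : G.Walk u v) (q : G.Walk v w) (i : ℕ) :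
    (p.append q).getVert (p.length + i) = q.getVert i := by
  simp [Walk.getVert_append]

section Displacement

variable {θ : G ≃g G} {a : V} (hmin : ∀ v, G.dist a (θ a) ≤ G.dist v (θ v))
  {w : G.Walk a (θ a)} (hw : w.length = G.dist a (θ a))
include hmin hw

lemma getVert_ne_map_getVert_of_minimal {i k : ℕ} (hi : i < w.length) (hk : k < w.length) :
    w.getVert i ≠ θ (w.getVert k) := by
  intro h
  have hdisp := hmin (w.getVert k)
  rw [← h, ← hw] at hdisp
  rcases le_total i k with hik | hki
  · have := w.dist_getVert_le hik
    rw [dist_comm] at this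
    omega
  · have := w.dist_getVert_le hki
    omega

lemma injOn_getVert_append_map_of_minimal :
    Set.InjOn (w.append (w.map θ.toHom)).getVert (Set.Iio (2 * w.length)) := by
  have hpath := (w.isPath_of_length_eq_dist hw).getVert_injOn
  suffices key : ∀ i j, i < j → j < 2 * w.length →
      (w.append (w.map θ.toHom)).getVert i ≠ (w.append (w.map θ.toHom)).getVert j by
    intro i hi j hj h
    by_contra hne
    rcases lt_or_gt_of_ne hne with hij | hji
    · exact key i j hij hj h
    · exact key j i hji hi h.symm
  intro i j hij hj h
  rcases lt_or_ge j w.length with hjn | hjn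
  · rw [w.getVert_append_of_lt _ (hij.trans hjn), w.getVert_append_of_lt _ hjn] at h
    exact hij.ne (hpath (show i ≤ w.length by omega) (show j ≤ w.length by omega) h)
  obtain ⟨k, rfl⟩ := Nat.exists_eq_add_of_le hjn
  rw [w.getVert_append_length_add, Walk.getVert_map] at h
  rcases lt_or_ge i w.length with hin | hin
  · rw [w.getVert_append_of_lt _ hin] at h
    exact getVert_ne_map_getVert_of_minimal hmin hw hin (by omega) h
  obtain ⟨l, rfl⟩ := Nat.exists_eq_add_of_le hin
  rw [w.getVert_append_length_add, Walk.getVert_map] at h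
  have := hpath (show l ≤ w.length by omega) (show k ≤ w.length by omega) (θ.injective h)
  omega

end Displacement

lemma _root_.Nonrepetitive.exists_getVert_ne {K : Type*} {c : V → K} (hc : Nonrepetitive G c)
    {u v : V} (p : G.Walk u v) {n : ℕ} (hn : 0 < n) (hlen : 2 * n ≤ p.length + 1)
    (hinj : Set.InjOn p.getVert (Set.Iio (2 * n))) :
    ∃ i < n, c (p.getVert i) ≠ c (p.getVert (n + i)) :=
  hc n hn p.getVert (fun _ _ hi hj hij h ↦ hij (hinj hi hj h))
    fun _ hi ↦ p.adj_getVert_succ (by omega)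

end SimpleGraph

open SimpleGraph in
/-- a color-preserving automorphism of a connected graph with a nonrepetitive
coloring fixes a vertex. -/
theorem color_preserving_automorphism_has_fixed_point
    {V K : Type*} (G : SimpleGraph V) (hconn : G.Connected)
    (c : V → K) (hc : Nonrepetitive G c)
    (θ : G ≃g G) (hθ : ∀ v : V, c (θ v) = c v) :
    ∃ v : V, θ v = v := by
  by_contra! hfix
  have : Nonempty V := hconn.nonempty
  obtain ⟨a, hmin⟩ : ∃ a, ∀ v, G.dist a (θ a) ≤ G.dist v (θ v) :=
    ⟨_, fun v ↦ Function.argmin_le (fun v ↦ G.dist v (θ v)) v⟩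
  obtain ⟨w, hw⟩ := hconn.exists_walk_length_eq_dist a (θ a)
  have hpos : 0 < w.length := hw ▸ hconn.pos_dist_of_ne (hfix a).symm
  obtain ⟨i, hi, hne⟩ := hc.exists_getVert_ne (w.append (w.map θ.toHom)) hpos
    (by simp only [Walk.length_append, Walk.length_map]; omega)
    (injOn_getVert_append_map_of_minimal hmin hw)
  rw [w.getVert_append_of_lt _ hi, w.getVert_append_length_add, Walk.getVert_map] at hne
  exact hne (hθ _).symm
end

section
/- Let Γ be a finitely generated group and Z a coamenable uniformly recurrent subgroup of Γ. Then Z is sofic. -/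
open scoped Classical

/-- A subgroup `H ≤ Γ` is coamenable if the action of `Γ` on `Γ/H` is amenable: there is
a sequence of nonempty finite subsets `Fₖ ⊆ Γ/H` with `|g•Fₖ ∪ Fₖ|/|Fₖ| → 1` for all `g`. -/
noncomputable def Coamenable {Γ : Type*} [Group Γ] (H : Subgroup Γ) : Prop :=
  ∃ F : ℕ → Finset (Γ ⧸ H), (∀ k, (F k).Nonempty) ∧
    ∀ g : Γ, Filter.Tendsto
      (fun k => ((((F k).image (fun x => g • x)) ∪ F k).card : ℝ) / ((F k).card : ℝ))
      Filter.atTop (nhds 1)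

/-- The word length of an element of a free group (length of its reduced word). -/
def wordLength {n : ℕ} (w : FreeGroup (Fin n)) : ℕ := (FreeGroup.toWord w).length

/-- `p` is a `(Z,r)`-vertex: there is `H ∈ Z` such that words of length at most `r`
move `p` exactly as they move the base coset of `Γ/H`. -/
def IsZRVertex {Γ : Type} [Group Γ] {n : ℕ} (γ : Fin n → Γ) (Z : Set (Subgroup Γ))
    {V : Type} (ρ : FreeGroup (Fin n) →* Equiv.Perm V) (r : ℕ) (p : V) : Prop :=
  ∃ H ∈ Z, ∀ w w' : FreeGroup (Fin n), wordLength w ≤ r → wordLength w' ≤ r →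
    (ρ w p = ρ w' p ↔
      (QuotientGroup.mk (FreeGroup.lift γ w) : Γ ⧸ H) = QuotientGroup.mk (FreeGroup.lift γ w'))

/-- A URS `Z` is sofic (w.r.t. the generating tuple `γ`): for every `r ≥ 1` and `ε > 0`
there is a finite nonempty free-group set in which at least a `(1-ε)` proportion of the
points are `(Z,r)`-vertices. -/
def IsSoficURS {Γ : Type} [Group Γ] {n : ℕ} (γ : Fin n → Γ) (Z : Set (Subgroup Γ)) : Prop :=
  ∀ r : ℕ, 1 ≤ r → ∀ ε : ℝ, 0 < ε →
    ∃ (V : Type) (_ : Fintype V) (_ : Nonempty V)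
      (ρ : FreeGroup (Fin n) →* Equiv.Perm V),
      (1 - ε) * (Fintype.card V : ℝ) ≤
        ({p : V | IsZRVertex γ Z ρ r p}.ncard : ℝ)

/-! Fix `H ∈ Z` and a Følner set `F ⊆ Γ/H` that is almost invariant under the finite ball of
radius `r` in `Γ`. Each generator `γᵢ` maps `F ∩ γᵢ⁻¹F` bijectively onto `F ∩ γᵢF`; extending
these partial bijections arbitrarily to permutations of `F` turns `F` into a finite `F_n`-set.
At a point `x = g₀H` whose whole `r`-ball stays inside `F`, words of length `≤ r` act on `x`
exactly as on `Γ/H`, so `x` is a `(Z,r)`-vertex witnessed by its stabilizer `g₀Hg₀⁻¹ ∈ Z`,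
and almost invariance makes all but an `ε`-fraction of the points of `F` of this kind. -/

open Finset

section RestrictedAction

variable {G X : Type*} [Group G] [MulAction G X]

noncomputable def restrictSMulPerm (g : G) (F : Finset X) : Equiv.Perm F :=
  Equiv.extendSubtype (p := fun x : F => g • (x : X) ∈ F) (q := fun x : F => g⁻¹ • (x : X) ∈ F)
    { toFun := fun x => ⟨⟨g • (x : X), x.2⟩, by simp⟩
      invFun := fun y => ⟨⟨g⁻¹ • (y : X), y.2⟩, by simp⟩
      left_inv := fun x => by simp
      right_inv := fun y => by simp }

variable {g : G} {F : Finset X}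

theorem restrictSMulPerm_apply {x : F} (hx : g • (x : X) ∈ F) :
    (restrictSMulPerm g F x : X) = g • (x : X) := by
  rw [restrictSMulPerm, Equiv.extendSubtype_apply_of_mem _ x hx]
  rfl

theorem restrictSMulPerm_symm_apply {x : F} (hx : g⁻¹ • (x : X) ∈ F) :
    ((restrictSMulPerm g F).symm x : X) = g⁻¹ • (x : X) := by
  have hy : g • ((⟨g⁻¹ • (x : X), hx⟩ : F) : X) ∈ F := by simp
  have := restrictSMulPerm_apply hy
  rw [smul_inv_smul, ← Subtype.ext_iff] at this
  rw [(Equiv.symm_apply_eq _).2 this.symm]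

noncomputable def restrictAction {n : ℕ} (γ : Fin n → G) (F : Finset X) :
    FreeGroup (Fin n) →* Equiv.Perm F :=
  FreeGroup.lift fun i => restrictSMulPerm (γ i) F

variable {n : ℕ} {γ : Fin n → G}

theorem restrictAction_mk_singleton_apply (a : Fin n × Bool) {x : F}
    (hx : FreeGroup.lift γ (FreeGroup.mk [a]) • (x : X) ∈ F) :
    (restrictAction γ F (FreeGroup.mk [a]) x : X) = FreeGroup.lift γ (FreeGroup.mk [a]) • x := by
  obtain ⟨i, _ | _⟩ := a
  · simp only [FreeGroup.lift_mk, List.map_cons, List.map_nil, List.prod_cons, List.prod_nil,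
      cond_false, mul_one] at hx ⊢
    exact restrictSMulPerm_symm_apply hx
  · simp only [FreeGroup.lift_mk, List.map_cons, List.map_nil, List.prod_cons, List.prod_nil,
      cond_true, mul_one] at hx ⊢
    exact restrictSMulPerm_apply hx

theorem restrictAction_mk_apply (L : List (Fin n × Bool)) (x : F)
    (hx : ∀ M, M <:+ L → FreeGroup.lift γ (FreeGroup.mk M) • (x : X) ∈ F) :
    (restrictAction γ F (FreeGroup.mk L) x : X) = FreeGroup.lift γ (FreeGroup.mk L) • x := by
  induction L with
  | nil => simp [← FreeGroup.one_eq_mk]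
  | cons a L ih =>
    have ih := ih fun M hM => hx M (hM.trans (List.suffix_cons a L))
    have hcons := hx (a :: L) List.suffix_rfl
    rw [← List.singleton_append, ← FreeGroup.mul_mk, map_mul, mul_smul, ← ih] at hcons
    rw [← List.singleton_append, ← FreeGroup.mul_mk, map_mul, map_mul, mul_smul,
      Equiv.Perm.mul_apply, ← ih]
    exact restrictAction_mk_singleton_apply a hcons

end RestrictedAction

section WordBall

variable {G : Type*} [Group G] {n : ℕ}

def wordBall (γ : Fin n → G) (r : ℕ) : Set G :=
  (fun M => FreeGroup.lift γ (FreeGroup.mk M)) '' {M | M.length ≤ r}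

theorem wordBall_finite (γ : Fin n → G) (r : ℕ) : (wordBall γ r).Finite :=
  (List.finite_length_le _ r).image _

theorem restrictAction_apply_of_forall_wordBall {X : Type*} [MulAction G X] {γ : Fin n → G}
    {F : Finset X} {r : ℕ} {x : F} (hx : ∀ g ∈ wordBall γ r, g • (x : X) ∈ F)
    {w : FreeGroup (Fin n)} (hw : wordLength w ≤ r) :
    (restrictAction γ F w x : X) = FreeGroup.lift γ w • (x : X) := by
  rw [← FreeGroup.mk_toWord (x := w)]
  exact restrictAction_mk_apply _ x fun M hM => hx _ ⟨M, hM.length_le.trans hw, rfl⟩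

end WordBall

theorem QuotientGroup.mk_eq_mk_stabilizer_iff {G X : Type*} [Group G] [MulAction G X] {x : X}
    {a b : G} : (a : G ⧸ MulAction.stabilizer G x) = b ↔ a • x = b • x := by
  rw [QuotientGroup.eq, MulAction.mem_stabilizer_iff, mul_smul, inv_smul_eq_iff, eq_comm]

theorem stabilizer_mk_eq_conjSub {G : Type*} [Group G] (H : Subgroup G) (g : G) :
    MulAction.stabilizer G (g : G ⧸ H) = conjSub g H := by
  have hg : (g : G ⧸ H) = g • ((1 : G) : G ⧸ H) := by
    rw [MulAction.Quotient.smul_mk, smul_eq_mul, mul_one]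
  rw [hg, MulAction.stabilizer_smul_eq_stabilizer_map_conj, MulAction.stabilizer_quotient]
  rfl

theorem isZRVertex_of_forall_wordBall {Γ : Type} [Group Γ] {n : ℕ} {γ : Fin n → Γ}
    {Z : Set (Subgroup Γ)} (hZ : ∀ g : Γ, ∀ H ∈ Z, conjSub g H ∈ Z) {H : Subgroup Γ}
    (hH : H ∈ Z) {F : Finset (Γ ⧸ H)} {r : ℕ} {x : F}
    (hx : ∀ g ∈ wordBall γ r, g • (x : Γ ⧸ H) ∈ F) : IsZRVertex γ Z (restrictAction γ F) r x := by
  obtain ⟨g₀, hg₀⟩ := QuotientGroup.mk_surjective (x : Γ ⧸ H)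
  refine ⟨MulAction.stabilizer Γ (x : Γ ⧸ H), ?_, fun w w' hw hw' => ?_⟩
  · rw [← hg₀, stabilizer_mk_eq_conjSub]
    exact hZ g₀ H hH
  · rw [Subtype.ext_iff, restrictAction_apply_of_forall_wordBall hx hw,
      restrictAction_apply_of_forall_wordBall hx hw', QuotientGroup.mk_eq_mk_stabilizer_iff]

section Counting

variable {G X : Type*} [Group G] [MulAction G X] [DecidableEq X]

theorem card_filter_smul_notMem_add_card (g : G) (F : Finset X) :
    #{x ∈ F | g • x ∉ F} + #F = #(F.image (g • ·) ∪ F) := by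
  rw [← card_sdiff_add_card, sdiff_eq_filter, filter_image,
    card_image_of_injective _ (MulAction.injective g)]

theorem card_filter_forall_smul_mem_ge (B : Finset G) (F : Finset X) {δ : ℝ}
    (hB : ∀ g ∈ B, (#{x ∈ F | g • x ∉ F} : ℝ) ≤ δ * #F) :
    (1 - #B * δ) * #F ≤ #{x ∈ F | ∀ g ∈ B, g • x ∈ F} := by
  have hbad : #{x ∈ F | ¬∀ g ∈ B, g • x ∈ F} ≤ ∑ g ∈ B, #{x ∈ F | g • x ∉ F} := by
    refine (card_le_card fun x hx => ?_).trans card_biUnion_le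
    simp only [mem_filter, not_forall, exists_prop] at hx
    obtain ⟨hxF, g, hg, hgx⟩ := hx
    exact mem_biUnion.2 ⟨g, hg, mem_filter.2 ⟨hxF, hgx⟩⟩
  have hsplit := card_filter_add_card_filter_not (s := F) (fun x => ∀ g ∈ B, g • x ∈ F)
  have hbad' : (#{x ∈ F | ¬∀ g ∈ B, g • x ∈ F} : ℝ) ≤ #B * (δ * #F) :=
    calc (#{x ∈ F | ¬∀ g ∈ B, g • x ∈ F} : ℝ) ≤ ∑ g ∈ B, (#{x ∈ F | g • x ∉ F} : ℝ) := by
          exact_mod_cast hbad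
      _ ≤ #B * (δ * #F) := by simpa using sum_le_sum hB
  have hsplit' : (#{x ∈ F | ∀ g ∈ B, g • x ∈ F} : ℝ) + #{x ∈ F | ¬∀ g ∈ B, g • x ∈ F} = #F := by
    exact_mod_cast hsplit
  linarith

end Counting

theorem Coamenable.exists_forall_card_filter_smul_notMem_lt {Γ : Type*} [Group Γ]
    {H : Subgroup Γ} (hH : Coamenable H) (B : Finset Γ) {δ : ℝ} (hδ : 0 < δ) :
    ∃ F : Finset (Γ ⧸ H), F.Nonempty ∧ ∀ g ∈ B, (#{x ∈ F | g • x ∉ F} : ℝ) < δ * #F := by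
  obtain ⟨F, hFne, hF⟩ := hH
  have hev : ∀ᶠ k in Filter.atTop, ∀ g ∈ B,
      (#((F k).image (g • ·) ∪ F k) : ℝ) / #(F k) < 1 + δ :=
    (Filter.eventually_all_finset B).2 fun g _ => (hF g).eventually_lt_const (by linarith)
  obtain ⟨k, hk⟩ := hev.exists
  have hpos : (0 : ℝ) < #(F k) := by exact_mod_cast (hFne k).card_pos
  refine ⟨F k, hFne k, fun g hg => ?_⟩
  have := hk g hg
  rw [div_lt_iff₀ hpos] at this
  have hunion : (#{x ∈ F k | g • x ∉ F k} : ℝ) + #(F k) = #((F k).image (g • ·) ∪ F k) := by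
    exact_mod_cast card_filter_smul_notMem_add_card g (F k)
  linarith

theorem Coamenable.exists_card_filter_forall_smul_mem_ge {Γ : Type*} [Group Γ]
    {H : Subgroup Γ} (hH : Coamenable H) (B : Finset Γ) {ε : ℝ} (hε : 0 < ε) :
    ∃ F : Finset (Γ ⧸ H), F.Nonempty ∧ (1 - ε) * #F ≤ #{x ∈ F | ∀ g ∈ B, g • x ∈ F} := by
  have hB : (0 : ℝ) < #B + 1 := by positivity
  obtain ⟨F, hFne, hF⟩ := hH.exists_forall_card_filter_smul_notMem_lt B (div_pos hε hB)
  refine ⟨F, hFne, le_trans ?_ (card_filter_forall_smul_mem_ge (δ := ε / (#B + 1)) B F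
    fun g hg => (hF g hg).le)⟩
  gcongr
  rw [mul_div_assoc', div_le_iff₀ hB]
  linarith

theorem Finset.ncard_setOf_coe_eq_card_filter {α : Type*} (F : Finset α) (P : α → Prop)
    [DecidablePred P] : {x : F | P x}.ncard = #{x ∈ F | P x} := by
  rw [← Set.ncard_image_of_injective _ Subtype.val_injective, ← Set.ncard_coe_finset]
  congr 1
  ext y
  simp [and_comm]

theorem coamenable_urs_is_sofic_general
    {Γ : Type} [Group Γ] {n : ℕ} (γ : Fin n → Γ)
    (Z : Set (Subgroup Γ)) (hZ : IsURS Z)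
    (hcoam : ∀ H ∈ Z, Coamenable H) :
    IsSoficURS γ Z := by
  intro r _ ε hε
  obtain ⟨H, hH⟩ := hZ.nonempty
  set B := (wordBall_finite γ r).toFinset
  obtain ⟨F, hFne, hF⟩ := (hcoam H hH).exists_card_filter_forall_smul_mem_ge B hε
  refine ⟨F, inferInstance, hFne.coe_sort, restrictAction γ F, ?_⟩
  calc (1 - ε) * (Fintype.card F : ℝ) = (1 - ε) * #F := by rw [Fintype.card_coe]
    _ ≤ #{x ∈ F | ∀ g ∈ B, g • x ∈ F} := hF
    _ = {x : F | ∀ g ∈ B, g • (x : Γ ⧸ H) ∈ F}.ncard := by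
      exact_mod_cast (F.ncard_setOf_coe_eq_card_filter fun x => ∀ g ∈ B, g • x ∈ F).symm
    _ ≤ {x : F | IsZRVertex γ Z (restrictAction γ F) r x}.ncard := by
      refine Nat.cast_le.2 (Set.ncard_le_ncard (fun x hx => ?_) (Set.toFinite _))
      exact isZRVertex_of_forall_wordBall hZ.invariant hH fun g hg => hx g (by simpa [B] using hg)

/-- every coamenable URS of a finitely generated group is sofic. -/
theorem coamenable_urs_is_sofic
    {Γ : Type} [Group Γ] {n : ℕ} (γ : Fin n → Γ)
    (hgen : Subgroup.closure (Set.range γ) = ⊤)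
    (hsym : ∀ i : Fin n, (γ i)⁻¹ ∈ Set.range γ)
    (Z : Set (Subgroup Γ)) (hZ : IsURS Z)
    (hcoam : ∀ H ∈ Z, Coamenable H) :
    IsSoficURS γ Z :=
  coamenable_urs_is_sofic_general γ Z hZ hcoam
end
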